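/- arXiv:2407.03609 — 2 statements merged into one kernel-verified Lean document; each statement's English description precedes it below -/
import Mathlib

section
/- The number of monic irreducible polynomials of degree n over the field GF(2) is at least 2^(n-1)/n for every positive integer n. -/
/-!
Every `α ∈ GF(2ⁿ)` has a minimal polynomial over `GF(2)` of degree `d ∣ n`. If `d = n` it is a
monic irreducible polynomial of degree `n`, and each such polynomial has at most `n` roots. If
`d < n`, then `α ^ 2 ^ d = α` for the proper divisor `d`, which leaves at most
`∑_{d ∣ n, d < n} 2 ^ d ≤ 2 ^ (n - 1)` elements. Hence `2 ^ n - 2 ^ (n - 1) ≤ n · #{irreducibles}`.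
-/

open Polynomial Finset Module IntermediateField

theorem Polynomial.finite_setOf_natDegree_le (R : Type*) [Semiring R] [Finite R] (n : ℕ) :
    {p : R[X] | p.natDegree ≤ n}.Finite :=
  have := Module.finite_of_finite R (M := degreeLT R (n + 1))
  (Set.toFinite (degreeLT R (n + 1) : Set R[X])).subset fun _ hp =>
    mem_degreeLT.2 (degree_le_natDegree.trans_lt (by exact_mod_cast Nat.lt_succ_of_le hp))

theorem card_filter_pow_eq_self_le {R : Type*} [CommRing R] [IsDomain R] [Fintype R]
    [DecidableEq R] {m : ℕ} (hm : 1 < m) : #{x : R | x ^ m = x} ≤ m := by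
  have hdeg : (X ^ m - X : R[X]).natDegree = m := by
    rw [natDegree_sub_eq_left_of_natDegree_lt] <;> simp [hm]
  have hne : (X ^ m - X : R[X]) ≠ 0 := ne_zero_of_natDegree_gt (hdeg ▸ zero_lt_one.trans hm)
  calc #{x : R | x ^ m = x} ≤ (X ^ m - X : R[X]).roots.toFinset.card :=
        card_le_card fun x hx => by simpa [mem_roots hne, sub_eq_zero] using hx
    _ ≤ (X ^ m - X : R[X]).roots.card := Multiset.toFinset_card_le _
    _ ≤ m := (card_roots' _).trans hdeg.le

theorem pow_card_pow_natDegree_minpoly {K L : Type*} [Field K] [Finite K] [Field L]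
    [Algebra K L] {α : L} (hα : IsIntegral K α) :
    α ^ Nat.card K ^ (minpoly K α).natDegree = α := by
  have := adjoin.finiteDimensional hα
  have := Module.finite_of_finite K (M := K⟮α⟯)
  have := Fintype.ofFinite K⟮α⟯
  have hcard : Fintype.card K⟮α⟯ = Nat.card K ^ (minpoly K α).natDegree := by
    rw [← Nat.card_eq_fintype_card, Module.natCard_eq_pow_finrank (K := K), adjoin.finrank hα]
  simpa [hcard] using
    congrArg Subtype.val (FiniteField.pow_card (⟨α, mem_adjoin_simple_self K α⟩ : K⟮α⟯))

section

variable {K L : Type*} [Field K] [Finite K] [Field L] [Fintype L] [DecidableEq L] [Algebra K L]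

theorem card_filter_natDegree_minpoly_ne_finrank_le :
    #{α : L | (minpoly K α).natDegree ≠ finrank K L} ≤
      ∑ d ∈ (finrank K L).properDivisors, Nat.card K ^ d := by
  have hsub : ({α : L | (minpoly K α).natDegree ≠ finrank K L} : Finset L) ⊆
      (finrank K L).properDivisors.biUnion fun d => {x : L | x ^ Nat.card K ^ d = x} := by
    intro α hα
    have hint : IsIntegral K α := .of_finite K α
    refine mem_biUnion.2 ⟨_, Nat.mem_properDivisors.2 ⟨minpoly.degree_dvd hint, ?_⟩, ?_⟩
    · exact (Nat.le_of_dvd finrank_pos (minpoly.degree_dvd hint)).lt_of_ne (mem_filter.1 hα).2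
    · simp [pow_card_pow_natDegree_minpoly hint]
  refine (card_le_card hsub).trans (card_biUnion_le.trans (sum_le_sum fun d hd => ?_))
  exact card_filter_pow_eq_self_le
    (Nat.one_lt_pow (Nat.pos_of_mem_properDivisors hd).ne' Finite.one_lt_card)

theorem card_filter_natDegree_minpoly_eq_le (n : ℕ) :
    #{α : L | (minpoly K α).natDegree = n} ≤
      n * Nat.card {p : K[X] // p.Monic ∧ p.natDegree = n ∧ Irreducible p} := by
  classical
  have hfin : {p : K[X] | p.Monic ∧ p.natDegree = n ∧ Irreducible p}.Finite :=
    (finite_setOf_natDegree_le K n).subset fun p hp => hp.2.1.le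
  rw [← Set.coe_ofPred, Nat.card_eq_card_finite_toFinset hfin]
  refine card_le_mul_card_image_of_maps_to (f := minpoly K) (fun α hα => ?_) n fun p hp => ?_
  · have hint : IsIntegral K α := .of_finite K α
    simpa [(mem_filter.1 hα).2] using ⟨minpoly.monic hint, minpoly.irreducible hint⟩
  · obtain ⟨-, hpdeg, hpirr⟩ := hfin.mem_toFinset.1 hp
    have hp0 : p.map (algebraMap K L) ≠ 0 :=
      (Polynomial.map_ne_zero_iff (algebraMap K L).injective).2 hpirr.ne_zero
    calc #{α ∈ {α : L | (minpoly K α).natDegree = n} | minpoly K α = p}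
        ≤ (p.aroots L).toFinset.card := card_le_card fun α hα => by
          obtain ⟨-, rfl⟩ := mem_filter.1 hα
          simp [mem_roots hp0]
      _ ≤ (p.aroots L).card := Multiset.toFinset_card_le _
      _ ≤ n := (card_roots' _).trans (by simp [hpdeg])

theorem pow_finrank_le_finrank_mul_card_irreducible_add :
    Nat.card K ^ finrank K L ≤
      finrank K L * Nat.card {p : K[X] // p.Monic ∧ p.natDegree = finrank K L ∧ Irreducible p} +
        ∑ d ∈ (finrank K L).properDivisors, Nat.card K ^ d := by
  rw [← Module.natCard_eq_pow_finrank, Nat.card_eq_fintype_card, ← card_univ,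
    ← card_filter_add_card_filter_not fun α : L => (minpoly K α).natDegree = finrank K L]
  exact add_le_add (card_filter_natDegree_minpoly_eq_le _)
    card_filter_natDegree_minpoly_ne_finrank_le

end

theorem sum_Ioc_two_pow_add_two (m : ℕ) : ∑ d ∈ Ioc 0 m, 2 ^ d + 2 = 2 ^ (m + 1) := by
  induction m with
  | zero => simp
  | succ m ih => rw [sum_Ioc_succ_top (Nat.zero_le _), add_right_comm, ih, pow_succ _ (m + 1)]; ring

theorem Nat.le_div_two_of_mem_properDivisors {d n : ℕ} (h : d ∈ n.properDivisors) : d ≤ n / 2 := by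
  obtain ⟨⟨k, rfl⟩, hlt⟩ := Nat.mem_properDivisors.1 h
  have : 2 ≤ k := by
    by_contra! hk
    interval_cases k <;> simp at hlt
  exact (Nat.le_div_iff_mul_le two_pos).2 (by nlinarith)

theorem sum_properDivisors_two_pow_le (n : ℕ) : ∑ d ∈ n.properDivisors, 2 ^ d ≤ 2 ^ (n - 1) := by
  calc ∑ d ∈ n.properDivisors, 2 ^ d ≤ ∑ d ∈ Ioc 0 (n / 2), 2 ^ d :=
        sum_le_sum_of_subset fun d hd =>
          mem_Ioc.2 ⟨Nat.pos_of_mem_properDivisors hd, Nat.le_div_two_of_mem_properDivisors hd⟩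
    _ ≤ 2 ^ (n - 1) := by
      have hsum := sum_Ioc_two_pow_add_two (n / 2)
      rcases (by omega : n ≤ 2 ∨ n / 2 + 1 ≤ n - 1) with hn | hn
      · interval_cases n <;> simp
      · have := Nat.pow_le_pow_right two_pos hn
        omega

/-- The number of (monic) irreducible polynomials of exact degree `n`
over `GF(2)` is at least `2^(n-1)/n` for every positive integer `n`. -/
theorem card_irreducible_polys_GF2_ge (n : ℕ) (hn : 0 < n) :
    (2 : ℝ) ^ (n - 1) / n ≤
      Nat.card {p : Polynomial (ZMod 2) // p.Monic ∧ p.natDegree = n ∧ Irreducible p} := by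
  classical
  have := Fintype.ofFinite (GaloisField 2 n)
  have hcount :=
    pow_finrank_le_finrank_mul_card_irreducible_add (K := ZMod 2) (L := GaloisField 2 n)
  rw [GaloisField.finrank 2 hn.ne', Nat.card_zmod] at hcount
  have hhalf : 2 ^ n = 2 ^ (n - 1) + 2 ^ (n - 1) := by
    rw [← two_mul, ← pow_succ', Nat.sub_add_cancel hn]
  have hmain : 2 ^ (n - 1) ≤
      n * Nat.card {p : (ZMod 2)[X] // p.Monic ∧ p.natDegree = n ∧ Irreducible p} := by
    have := sum_properDivisors_two_pow_le n
    omega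
  rw [div_le_iff₀ (by exact_mod_cast hn), mul_comm]
  exact_mod_cast hmain
end

section
/- For the guessing probability of a classical random variable X given quantum side information B, P_guess(X|B) = max over POVMs {E_B^x} of Σ_x P_x Tr(E_B^x ρ_B^x) equals 2^(−H_min(X|B)), the exponential of minus the conditional min-entropy. -/
open scoped ComplexOrder
open Finset Matrix

/-!
Write `A x = P x • ρ x` and let `α` be the dual optimum `inf {Tr σ : σ ⪰ A x for all x}`.
For a POVM `E` and a feasible `σ`, `∑ Re Tr (E x * A x) ≤ ∑ Re Tr (E x * σ) = Tr σ`, so every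
guessing probability is at most `α` (weak duality).

For the converse, consider the set of perturbations `Y` for which some Hermitian `σ` with
`Tr σ < α` satisfies `σ - A x + Y x ≻ 0` for all `x`. It is open and convex and does not contain
`0`, so Hahn–Banach gives a functional positive on it, of the form `Y ↦ ∑ Re Tr (G x * Y x)` on
Hermitian tuples. The set is stable under adding positive semidefinite matrices, so `G x ⪰ 0`;
it is stable under adding a traceless Hermitian `H` to every coordinate (replace `σ` by `σ - H`),
so `∑ G x = μ • 1`; and it contains `fun x => A x - s • 1` whenever `s * d < α`, which gives
`μ * α ≤ ∑ Re Tr (G x * A x)` with `μ > 0`. Hence `G / μ` is a POVM attaining `α`.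
-/

namespace Matrix

variable {m n : Type*} [Fintype m] [Fintype n]

lemma re_trace_mul_nonneg [DecidableEq n] {A B : Matrix n n ℂ} (hA : A.PosSemidef)
    (hB : B.PosSemidef) : 0 ≤ (A * B).trace.re := by
  open scoped MatrixOrder in
  obtain ⟨C, rfl⟩ := CStarAlgebra.nonneg_iff_eq_star_mul_self.mp hB.nonneg
  rw [← Matrix.mul_assoc, trace_mul_comm, ← Matrix.mul_assoc]
  exact (Complex.nonneg_iff.mp (hA.mul_mul_conjTranspose_same C).trace_nonneg).1

lemma eq_zero_of_re_trace_mul_conjTranspose_self_eq_zero {A : Matrix m n ℂ}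
    (h : (A * Aᴴ).trace.re = 0) : A = 0 := by
  have him := (Complex.nonneg_iff.mp (posSemidef_self_mul_conjTranspose A).trace_nonneg).2
  exact trace_mul_conjTranspose_self_eq_zero_iff.mp (Complex.ext h him.symm)

lemma exists_eq_re_trace_mul (ℓ : Module.Dual ℝ (Matrix n n ℂ)) :
    ∃ D : Matrix n n ℂ, ∀ W, ℓ W = (D * W).trace.re := by
  let Φ : Matrix n n ℂ →ₗ[ℝ] Module.Dual ℝ (Matrix n n ℂ) :=
    LinearMap.mk₂ ℝ (fun D W => (D * W).trace.re) (by simp [add_mul]) (by simp)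
      (by simp [mul_add]) (by simp)
  have hΦ : Function.Injective Φ := by
    rw [← LinearMap.ker_eq_bot, LinearMap.ker_eq_bot']
    exact fun D hD => eq_zero_of_re_trace_mul_conjTranspose_self_eq_zero (LinearMap.congr_fun hD Dᴴ)
  obtain ⟨D, hD⟩ :=
    (LinearMap.injective_iff_surjective_of_finrank_eq_finrank Subspace.dual_finrank_eq.symm).mp hΦ ℓ
  exact ⟨D, fun W => (LinearMap.congr_fun hD W).symm⟩

lemma exists_isHermitian_eq_re_trace_mul (ℓ : Module.Dual ℝ (Matrix n n ℂ)) :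
    ∃ G : Matrix n n ℂ, G.IsHermitian ∧ ∀ W, W.IsHermitian → ℓ W = (G * W).trace.re := by
  obtain ⟨D, hD⟩ := exists_eq_re_trace_mul ℓ
  refine ⟨realPart D, isHermitian_iff_isSelfAdjoint.mpr (realPart D).2, fun W hW => ?_⟩
  have hDW : (Dᴴ * W).trace.re = (D * W).trace.re := by
    rw [← hW.eq, ← conjTranspose_mul, trace_conjTranspose, Complex.star_def, Complex.conj_re,
      hW.eq, trace_mul_comm]
  rw [realPart_apply_coe, smul_mul, trace_smul, add_mul, trace_add, Complex.smul_re,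
    Complex.add_re, star_eq_conjTranspose, hDW, hD]
  simp only [smul_eq_mul]
  ring

lemma IsHermitian.posSemidef_of_re_trace_mul_nonneg {G : Matrix n n ℂ} (hG : G.IsHermitian)
    (h : ∀ Z : Matrix n n ℂ, Z.PosSemidef → 0 ≤ (G * Z).trace.re) : G.PosSemidef := by
  refine .of_dotProduct_mulVec_nonneg hG fun z => ?_
  have hz := h _ (posSemidef_vecMulVec_self_star z)
  rw [mul_vecMulVec, trace_vecMulVec, dotProduct_comm] at hz
  exact Complex.nonneg_iff.mpr ⟨hz, (hG.im_star_dotProduct_mulVec_self z).symm⟩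

lemma IsHermitian.exists_eq_smul_one [DecidableEq n] [Nonempty n] {G : Matrix n n ℂ}
    (hG : G.IsHermitian)
    (h : ∀ H : Matrix n n ℂ, H.IsHermitian → H.trace = 0 → (G * H).trace.re = 0) :
    ∃ μ : ℝ, G = μ • 1 := by
  set μ : ℝ := G.trace.re / Fintype.card n
  set H := G - μ • (1 : Matrix n n ℂ) with hH
  have hHherm : H.IsHermitian := hG.sub (isHermitian_one.smul (.all μ))
  have hGtr : G.trace.im = 0 := by
    have := congrArg (fun M => M.trace.im) hG.eq
    simp only [trace_conjTranspose, Complex.star_def, Complex.conj_im] at this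
    linarith
  have hHtr : H.trace = 0 := by
    apply Complex.ext <;> simp [H, μ, hGtr]
  refine ⟨μ, sub_eq_zero.mp (eq_zero_of_re_trace_mul_conjTranspose_self_eq_zero ?_)⟩
  rw [hHherm.eq]
  nth_rw 1 [hH]
  rw [sub_mul, trace_sub, Complex.sub_re, h H hHherm hHtr, smul_mul, one_mul, trace_smul, hHtr]
  simp

variable (n) in
/-- The Hermitian part of `B` is positive definite; unlike `PosDef`, this is an open condition
on all matrices. -/
def strictlyAccretive : Set (Matrix n n ℂ) :=
  {B | ∀ z : n → ℂ, z ≠ 0 → 0 < (star z ⬝ᵥ B *ᵥ z).re}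

lemma re_dotProduct_mulVec_real_smul (B : Matrix n n ℂ) (r : ℝ) (z : n → ℂ) :
    (star ((r : ℂ) • z) ⬝ᵥ B *ᵥ ((r : ℂ) • z)).re = r ^ 2 * (star z ⬝ᵥ B *ᵥ z).re := by
  simp only [star_smul, mulVec_smul, smul_dotProduct, dotProduct_smul, Complex.star_def,
    Complex.conj_ofReal, smul_eq_mul, Complex.re_ofReal_mul]
  ring

lemma strictlyAccretive_eq_sphere :
    strictlyAccretive n = {B | ∀ z ∈ Metric.sphere (0 : n → ℂ) 1, 0 < (star z ⬝ᵥ B *ᵥ z).re} := by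
  ext B
  refine ⟨fun hB z hz => hB z (ne_zero_of_mem_unit_sphere ⟨z, hz⟩), fun hB z hz => ?_⟩
  have hnorm : 0 < ‖z‖ := norm_pos_iff.mpr hz
  have hu : ((‖z‖⁻¹ : ℝ) : ℂ) • z ∈ Metric.sphere (0 : n → ℂ) 1 := by
    simp [norm_smul, hnorm.ne']
  have hzu : z = ((‖z‖ : ℝ) : ℂ) • ((‖z‖⁻¹ : ℝ) : ℂ) • z := by
    rw [smul_smul, ← Complex.ofReal_mul, mul_inv_cancel₀ hnorm.ne', Complex.ofReal_one, one_smul]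
  rw [hzu, re_dotProduct_mulVec_real_smul]
  exact mul_pos (by positivity) (hB _ hu)

lemma isOpen_strictlyAccretive : IsOpen (strictlyAccretive n) := by
  have hF : Continuous fun p : Matrix n n ℂ × (n → ℂ) => (star p.2 ⬝ᵥ p.1 *ᵥ p.2).re := by
    fun_prop
  rw [strictlyAccretive_eq_sphere, isOpen_iff_eventually]
  exact fun B hB => (isCompact_sphere 0 1).eventually_forall_of_forall_eventually fun z hz =>
    hF.continuousAt.eventually (lt_mem_nhds (hB z hz))

lemma PosDef.mem_strictlyAccretive {B : Matrix n n ℂ} (hB : B.PosDef) :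
    B ∈ strictlyAccretive n :=
  fun _ hz => hB.re_dotProduct_pos hz

lemma IsHermitian.posDef_of_mem_strictlyAccretive {B : Matrix n n ℂ} (hB : B.IsHermitian)
    (h : B ∈ strictlyAccretive n) : B.PosDef :=
  .of_dotProduct_mulVec_pos hB fun z hz =>
    Complex.lt_def.mpr ⟨h z hz, (hB.im_star_dotProduct_mulVec_self z).symm⟩

lemma add_posSemidef_mem_strictlyAccretive {B C : Matrix n n ℂ} (hB : B ∈ strictlyAccretive n)
    (hC : C.PosSemidef) : B + C ∈ strictlyAccretive n := fun z hz => by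
  rw [add_mulVec, dotProduct_add, Complex.add_re]
  exact add_pos_of_pos_of_nonneg (hB z hz) (hC.re_dotProduct_nonneg z)

lemma convex_strictlyAccretive : Convex ℝ (strictlyAccretive n) := by
  refine convex_iff_forall_pos.mpr fun B hB C hC a b ha hb _ z hz => ?_
  simp only [add_mulVec, smul_mulVec, dotProduct_add, dotProduct_smul, Complex.add_re,
    Complex.smul_re, smul_eq_mul]
  exact add_pos (mul_pos ha (hB z hz)) (mul_pos hb (hC z hz))

end Matrix

namespace GuessingProbability

variable {ι n : Type*} [Fintype n]

def IsPOVM [Fintype ι] [DecidableEq n] (E : ι → Matrix n n ℂ) : Prop :=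
  (∀ x, (E x).PosSemidef) ∧ ∑ x, E x = 1

def guessingValues [Fintype ι] [DecidableEq n] (A : ι → Matrix n n ℂ) : Set ℝ :=
  {r | ∃ E, IsPOVM E ∧ r = ∑ x, (E x * A x).trace.re}

def dualValues (A : ι → Matrix n n ℂ) : Set ℝ :=
  {t | ∃ σ : Matrix n n ℂ, σ.PosSemidef ∧ (∀ x, (σ - A x).PosSemidef) ∧ t = σ.trace.re}

def strictlyFeasiblePerturbations (A : ι → Matrix n n ℂ) (c : ℝ) : Set (ι → Matrix n n ℂ) :=
  {Y | ∃ σ : Matrix n n ℂ, σ.IsHermitian ∧ σ.trace.re < c ∧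
    ∀ x, σ - A x + Y x ∈ strictlyAccretive n}

lemma sum_re_trace_mul_le_of_isPOVM [Fintype ι] [DecidableEq n] {A E : ι → Matrix n n ℂ}
    (hE : IsPOVM E)
    {σ : Matrix n n ℂ} (hσ : ∀ x, (σ - A x).PosSemidef) :
    ∑ x, (E x * A x).trace.re ≤ σ.trace.re :=
  calc ∑ x, (E x * A x).trace.re ≤ ∑ x, (E x * σ).trace.re := sum_le_sum fun x _ => by
        have := re_trace_mul_nonneg (hE.1 x) (hσ x)
        rw [mul_sub, trace_sub, Complex.sub_re] at this
        linarith
    _ = σ.trace.re := by rw [← Complex.re_sum, ← trace_sum, ← sum_mul, hE.2, one_mul]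

section Perturbations

variable (A : ι → Matrix n n ℂ) (c : ℝ)

lemma isOpen_strictlyFeasiblePerturbations [Finite ι] :
    IsOpen (strictlyFeasiblePerturbations A c) := by
  have : strictlyFeasiblePerturbations A c =
      ⋃ σ ∈ {σ : Matrix n n ℂ | σ.IsHermitian ∧ σ.trace.re < c},
        ⋂ x, (fun Y : ι → Matrix n n ℂ => σ - A x + Y x) ⁻¹' strictlyAccretive n := by
    ext Y
    simp [strictlyFeasiblePerturbations, and_assoc]
  rw [this]
  exact isOpen_biUnion fun σ _ => isOpen_iInter_of_finite fun x =>
    isOpen_strictlyAccretive.preimage (by fun_prop)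

lemma convex_strictlyFeasiblePerturbations : Convex ℝ (strictlyFeasiblePerturbations A c) := by
  refine convex_iff_forall_pos.mpr ?_
  rintro Y ⟨σ, hσ, hσc, hσY⟩ Y' ⟨σ', hσ', hσ'c, hσ'Y⟩ a b ha hb hab
  refine ⟨a • σ + b • σ', (hσ.smul (.all a)).add (hσ'.smul (.all b)), ?_, fun x => ?_⟩
  · simp only [trace_add, trace_smul, Complex.add_re, Complex.smul_re, smul_eq_mul]
    calc a * σ.trace.re + b * σ'.trace.re < a * c + b * c :=
          add_lt_add (mul_lt_mul_of_pos_left hσc ha) (mul_lt_mul_of_pos_left hσ'c hb)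
      _ = c := by rw [← add_mul, hab, one_mul]
  · have : a • σ + b • σ' - A x + (a • Y + b • Y') x =
        a • (σ - A x + Y x) + b • (σ' - A x + Y' x) := by
      simp only [Pi.add_apply, Pi.smul_apply]
      linear_combination (norm := module) hab • A x
    rw [this]
    exact convex_strictlyAccretive (hσY x) (hσ'Y x) ha.le hb.le hab

variable {A c}

lemma sub_smul_one_mem_strictlyFeasiblePerturbations [DecidableEq n] {s : ℝ}
    (hs : s * Fintype.card n < c) :
    (fun x => A x - s • (1 : Matrix n n ℂ)) ∈ strictlyFeasiblePerturbations A c := by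
  set δ := (c - s * Fintype.card n) / (Fintype.card n + 1)
  have hδ : 0 < δ := div_pos (by linarith) (by positivity)
  refine ⟨(s + δ) • 1, isHermitian_one.smul (.all _), ?_, fun x => ?_⟩
  · have : δ * Fintype.card n < c - s * Fintype.card n := by
      rw [div_mul_eq_mul_div, div_lt_iff₀ (by positivity)]
      nlinarith
    simp only [trace_smul, trace_one, Complex.smul_re, Complex.natCast_re, smul_eq_mul]
    linarith
  · have : (s + δ) • (1 : Matrix n n ℂ) - A x + (A x - s • 1) = δ • 1 := by module
    rw [this]
    exact (PosDef.one.smul hδ).mem_strictlyAccretive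

lemma nonempty_strictlyFeasiblePerturbations [DecidableEq n] [Nonempty n] :
    (strictlyFeasiblePerturbations A c).Nonempty := by
  have hN : (0 : ℝ) < Fintype.card n := Nat.cast_pos.mpr Fintype.card_pos
  exact ⟨_, sub_smul_one_mem_strictlyFeasiblePerturbations (s := (c - 1) / Fintype.card n)
    (by rw [div_mul_cancel₀ _ hN.ne']; linarith)⟩

lemma add_mem_strictlyFeasiblePerturbations {Y Z : ι → Matrix n n ℂ}
    (hY : Y ∈ strictlyFeasiblePerturbations A c) (hZ : ∀ x, (Z x).PosSemidef) :
    Y + Z ∈ strictlyFeasiblePerturbations A c := by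
  obtain ⟨σ, hσ, hσc, hσY⟩ := hY
  exact ⟨σ, hσ, hσc, fun x => by
    simpa [add_assoc] using add_posSemidef_mem_strictlyAccretive (hσY x) (hZ x)⟩

lemma add_const_mem_strictlyFeasiblePerturbations {Y : ι → Matrix n n ℂ} {H : Matrix n n ℂ}
    (hY : Y ∈ strictlyFeasiblePerturbations A c) (hH : H.IsHermitian) :
    Y + (fun _ => H) ∈ strictlyFeasiblePerturbations A (c - H.trace.re) := by
  obtain ⟨σ, hσ, hσc, hσY⟩ := hY
  refine ⟨σ - H, hσ.sub hH, by rw [trace_sub, Complex.sub_re]; linarith, fun x => ?_⟩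
  convert hσY x using 1
  simp only [Pi.add_apply]
  abel

lemma zero_notMem_strictlyFeasiblePerturbations [Nonempty ι] (hA : ∀ x, (A x).PosSemidef) :
    0 ∉ strictlyFeasiblePerturbations A (sInf (dualValues A)) := by
  rintro ⟨σ, hσ, hσc, hσA⟩
  have hfeas : ∀ x, (σ - A x).PosSemidef := fun x =>
    ((hσ.sub (hA x).isHermitian).posDef_of_mem_strictlyAccretive (by simpa using hσA x)).posSemidef
  have hσpsd : σ.PosSemidef := by
    simpa using (hfeas (Classical.arbitrary ι)).add (hA (Classical.arbitrary ι))
  have hbdd : BddBelow (dualValues A) :=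
    ⟨0, by rintro _ ⟨τ, hτ, -, rfl⟩; exact (Complex.nonneg_iff.mp hτ.trace_nonneg).1⟩
  exact hσc.not_ge (csInf_le hbdd ⟨σ, hσpsd, hfeas, rfl⟩)

end Perturbations

lemma nonneg_of_forall_pos_add_mul {a b : ℝ} (h : ∀ r : ℝ, 0 ≤ r → 0 < a + r * b) : 0 ≤ b := by
  by_contra! hb
  have := h (|a| / -b) (div_nonneg (abs_nonneg a) (by linarith))
  rw [div_mul_eq_mul_div, div_neg, mul_div_cancel_right₀ _ hb.ne] at this
  linarith [le_abs_self a]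

lemma eq_zero_of_forall_pos_add_mul {a b : ℝ} (h : ∀ r : ℝ, 0 < a + r * b) : b = 0 := by
  have h₁ := nonneg_of_forall_pos_add_mul fun r _ => h r
  have h₂ := nonneg_of_forall_pos_add_mul (b := -b) fun r _ => by simpa using h (-r)
  linarith

section Certificate

variable [DecidableEq ι] {A : ι → Matrix n n ℂ} {c : ℝ} {φ : (ι → Matrix n n ℂ) →ₗ[ℝ] ℝ}
  {G : ι → Matrix n n ℂ}

lemma map_eq_sum_re_trace_mul [Fintype ι]
    (hG : ∀ x W, W.IsHermitian → φ (Pi.single x W) = (G x * W).trace.re)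
    {Y : ι → Matrix n n ℂ} (hY : ∀ x, (Y x).IsHermitian) :
    φ Y = ∑ x, (G x * Y x).trace.re := by
  conv_lhs => rw [← Finset.univ_sum_single Y]
  rw [map_sum]
  exact sum_congr rfl fun x _ => hG x (Y x) (hY x)

lemma posSemidef_of_forall_pos [DecidableEq n] [Nonempty n]
    (hφ : ∀ Y ∈ strictlyFeasiblePerturbations A c, 0 < φ Y)
    (hG : ∀ x W, W.IsHermitian → φ (Pi.single x W) = (G x * W).trace.re)
    (hGh : ∀ x, (G x).IsHermitian) (x : ι) : (G x).PosSemidef := by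
  obtain ⟨Y, hY⟩ := nonempty_strictlyFeasiblePerturbations (A := A) (c := c)
  refine (hGh x).posSemidef_of_re_trace_mul_nonneg fun Z hZ => ?_
  rw [← hG x Z hZ.isHermitian]
  refine nonneg_of_forall_pos_add_mul (a := φ Y) fun r hr => ?_
  have hmem : Y + Pi.single x (r • Z) ∈ strictlyFeasiblePerturbations A c :=
    add_mem_strictlyFeasiblePerturbations hY fun y => by
      rcases eq_or_ne y x with rfl | hyx
      · simpa using hZ.smul hr
      · simpa [Pi.single_eq_of_ne hyx] using PosSemidef.zero
  simpa [Pi.single_smul] using hφ _ hmem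

lemma exists_sum_eq_smul_one [Fintype ι] [DecidableEq n] [Nonempty n]
    (hφ : ∀ Y ∈ strictlyFeasiblePerturbations A c, 0 < φ Y)
    (hG : ∀ x W, W.IsHermitian → φ (Pi.single x W) = (G x * W).trace.re)
    (hGpsd : ∀ x, (G x).PosSemidef) :
    ∃ μ : ℝ, ∑ x, G x = μ • 1 := by
  obtain ⟨Y, hY⟩ := nonempty_strictlyFeasiblePerturbations (A := A) (c := c)
  refine (posSemidef_sum _ fun x _ => hGpsd x).isHermitian.exists_eq_smul_one fun H hH hH0 => ?_
  rw [sum_mul, trace_sum, Complex.re_sum, ← map_eq_sum_re_trace_mul hG fun _ => hH]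
  refine eq_zero_of_forall_pos_add_mul (a := φ Y) fun r => ?_
  have hmem := add_const_mem_strictlyFeasiblePerturbations hY (hH.smul (.all r))
  rw [trace_smul, hH0, smul_zero, Complex.zero_re, sub_zero] at hmem
  simpa [show (fun _ : ι => r • H) = r • fun _ => H from rfl] using hφ _ hmem

lemma lt_sum_re_trace_mul [Fintype ι] [DecidableEq n] [Nonempty n]
    (hA : ∀ x, (A x).IsHermitian) (hφ : ∀ Y ∈ strictlyFeasiblePerturbations A c, 0 < φ Y)
    (hG : ∀ x W, W.IsHermitian → φ (Pi.single x W) = (G x * W).trace.re)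
    {μ : ℝ} (hμ : ∑ x, G x = μ • 1) {w : ℝ} (hw : w < c) :
    μ * w < ∑ x, (G x * A x).trace.re := by
  have hN : (0 : ℝ) < Fintype.card n := Nat.cast_pos.mpr Fintype.card_pos
  set s := w / Fintype.card n
  have hmem := sub_smul_one_mem_strictlyFeasiblePerturbations (A := A) (s := s)
    (by rwa [div_mul_cancel₀ _ hN.ne'])
  have hshift : ∑ x, (G x * (s • 1)).trace.re = μ * w := by
    rw [← Complex.re_sum, ← trace_sum, ← sum_mul, hμ, smul_mul_smul, mul_one, trace_smul,
      trace_one, Complex.real_smul, Complex.re_ofReal_mul, Complex.natCast_re, mul_assoc,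
      div_mul_cancel₀ _ hN.ne']
  have hpos := hφ _ hmem
  rwa [map_eq_sum_re_trace_mul hG fun x => (hA x).sub (isHermitian_one.smul (.all s)),
    sum_congr rfl fun x _ => by rw [mul_sub, trace_sub, Complex.sub_re], sum_sub_distrib,
    hshift, sub_pos] at hpos

end Certificate

lemma pos_of_sum_eq_smul_one_of_lt [Fintype ι] [DecidableEq n] [Nonempty n] {A G : ι → Matrix n n ℂ}
    (hG : ∀ x, (G x).PosSemidef) {μ : ℝ} (hμ : ∑ x, G x = μ • 1) {w : ℝ}
    (hw : μ * w < ∑ x, (G x * A x).trace.re) : 0 < μ := by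
  have hμ_nonneg : 0 ≤ μ := by
    have := (hμ ▸ posSemidef_sum univ fun x _ => hG x).diag_nonneg (i := Classical.arbitrary n)
    simpa using this
  refine hμ_nonneg.lt_of_ne' fun hμ_zero => ?_
  have hG_zero : ∀ x, G x = 0 := by
    open scoped MatrixOrder in
    exact fun x => (sum_eq_zero_iff_of_nonneg fun y _ => (hG y).nonneg).mp
      (by rw [hμ, hμ_zero, zero_smul]) x (mem_univ x)
  simp [hG_zero, hμ_zero] at hw

theorem exists_isPOVM_le_sum_of_zero_notMem [Fintype ι] [DecidableEq n] [Nonempty n]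
    {A : ι → Matrix n n ℂ} {c : ℝ} (hA : ∀ x, (A x).IsHermitian)
    (h0 : 0 ∉ strictlyFeasiblePerturbations A c) :
    ∃ E, IsPOVM E ∧ c ≤ ∑ x, (E x * A x).trace.re := by
  classical
  obtain ⟨f, hf⟩ := geometric_hahn_banach_open_point (convex_strictlyFeasiblePerturbations A c)
    (isOpen_strictlyFeasiblePerturbations A c) h0
  set φ : (ι → Matrix n n ℂ) →ₗ[ℝ] ℝ := -f.toLinearMap
  have hφ : ∀ Y ∈ strictlyFeasiblePerturbations A c, 0 < φ Y := fun Y hY => by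
    simpa [φ] using hf Y hY
  choose G hGh hG using fun x =>
    exists_isHermitian_eq_re_trace_mul (φ ∘ₗ LinearMap.single ℝ (fun _ => Matrix n n ℂ) x)
  have hGpsd := posSemidef_of_forall_pos hφ hG hGh
  obtain ⟨μ, hμ⟩ := exists_sum_eq_smul_one hφ hG hGpsd
  have hval : ∀ w < c, μ * w < ∑ x, (G x * A x).trace.re := fun w hw =>
    lt_sum_re_trace_mul hA hφ hG hμ hw
  have hμ_pos := pos_of_sum_eq_smul_one_of_lt hGpsd hμ (hval (c - 1) (by linarith))
  refine ⟨fun x => μ⁻¹ • G x, ⟨fun x => (hGpsd x).smul (inv_nonneg.mpr hμ_pos.le), ?_⟩, ?_⟩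
  · rw [← smul_sum, hμ, smul_smul, inv_mul_cancel₀ hμ_pos.ne', one_smul]
  · simp only [smul_mul, trace_smul, Complex.smul_re, smul_eq_mul, ← mul_sum]
    exact le_of_forall_lt fun w hw => (lt_inv_mul_iff₀ hμ_pos).mpr (hval w hw)

lemma dualValues_nonempty [Fintype ι] {A : ι → Matrix n n ℂ} (hA : ∀ x, (A x).PosSemidef) :
    (dualValues A).Nonempty := by
  classical
  refine ⟨_, ∑ x, A x, posSemidef_sum _ fun x _ => hA x, fun x => ?_, rfl⟩
  rw [← add_sum_erase _ _ (mem_univ x), add_sub_cancel_left]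
  exact posSemidef_sum _ fun y _ => hA y

theorem isGreatest_guessingValues [Fintype ι] [Nonempty ι] [DecidableEq n] [Nonempty n]
    {A : ι → Matrix n n ℂ} (hA : ∀ x, (A x).PosSemidef) :
    IsGreatest (guessingValues A) (sInf (dualValues A)) := by
  have hweak : ∀ E, IsPOVM E → ∑ x, (E x * A x).trace.re ≤ sInf (dualValues A) :=
    fun E hE => le_csInf (dualValues_nonempty hA) fun _ ⟨_, _, hσ, ht⟩ =>
      ht ▸ sum_re_trace_mul_le_of_isPOVM hE hσ
  obtain ⟨E, hE, hEval⟩ := exists_isPOVM_le_sum_of_zero_notMem (fun x => (hA x).isHermitian)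
    (zero_notMem_strictlyFeasiblePerturbations hA)
  exact ⟨⟨E, hE, le_antisymm hEval (hweak E hE)⟩, fun _ ⟨E, hE, hr⟩ => hr ▸ hweak E hE⟩

end GuessingProbability

theorem guessing_prob_eq_exp_neg_min_entropy_general
    (d k : ℕ) (hd : 0 < d) (hk : 0 < k)
    (P : Fin k → ℝ) (hP0 : ∀ x, 0 ≤ P x)
    (ρ : Fin k → Matrix (Fin d) (Fin d) ℂ)
    (hρ : ∀ x, (ρ x).PosSemidef)
    (Hmin : ℝ)
    (hHmin : (2 : ℝ) ^ (-Hmin) =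
      sInf {t : ℝ | ∃ σ : Matrix (Fin d) (Fin d) ℂ, σ.PosSemidef ∧
        (∀ x, (σ - (P x : ℂ) • ρ x).PosSemidef) ∧ t = σ.trace.re}) :
    IsGreatest {r : ℝ | ∃ E : Fin k → Matrix (Fin d) (Fin d) ℂ,
        (∀ x, (E x).PosSemidef) ∧ (∑ x, E x = 1) ∧
        r = ∑ x, P x * ((E x * ρ x).trace.re)}
      ((2 : ℝ) ^ (-Hmin)) := by
  have := Fin.pos_iff_nonempty.mp hd
  have := Fin.pos_iff_nonempty.mp hk
  have hA : ∀ x, ((P x : ℂ) • ρ x).PosSemidef := fun x =>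
    (hρ x).smul (Complex.zero_le_real.mpr (hP0 x))
  rw [hHmin]
  convert GuessingProbability.isGreatest_guessingValues hA using 1
  · ext r
    simp only [Set.mem_ofPred_eq, GuessingProbability.guessingValues, GuessingProbability.IsPOVM,
      and_assoc, mul_smul_comm, trace_smul, smul_eq_mul, Complex.re_ofReal_mul]
  · rfl

/-- operational meaning of the conditional min-entropy (König–Renner–Schaffner).
For a classical random variable `X` (values in `Fin k`, distribution `P`) with quantum side
information `B` (states `ρ x` on a `d`-dimensional system), the optimal guessing probability
`P_guess(X|B) = max_{POVM} Σ_x P_x Tr(E_x ρ_x)` equals `2^(−H_min(X|B))`, where the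
conditional min-entropy of the cq state is characterized by its SDP form
`2^(−H_min(X|B)) = min { Tr σ : σ ⪰ P_x ρ_x for all x }`. -/
theorem guessing_prob_eq_exp_neg_min_entropy
    (d k : ℕ) (hd : 0 < d) (hk : 0 < k)
    (P : Fin k → ℝ) (hP0 : ∀ x, 0 ≤ P x) (hP1 : ∑ x, P x = 1)
    (ρ : Fin k → Matrix (Fin d) (Fin d) ℂ)
    (hρ : ∀ x, (ρ x).PosSemidef) (hρtr : ∀ x, (ρ x).trace = 1)
    (Hmin : ℝ)
    (hHmin : (2 : ℝ) ^ (-Hmin) =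
      sInf {t : ℝ | ∃ σ : Matrix (Fin d) (Fin d) ℂ, σ.PosSemidef ∧
        (∀ x, (σ - (P x : ℂ) • ρ x).PosSemidef) ∧ t = σ.trace.re}) :
    IsGreatest {r : ℝ | ∃ E : Fin k → Matrix (Fin d) (Fin d) ℂ,
        (∀ x, (E x).PosSemidef) ∧ (∑ x, E x = 1) ∧
        r = ∑ x, P x * ((E x * ρ x).trace.re)}
      ((2 : ℝ) ^ (-Hmin)) :=
  guessing_prob_eq_exp_neg_min_entropy_general d k hd hk P hP0 ρ hρ Hmin hHmin
end
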